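/- Suppose the quiver Q is acyclic, in the sense that every path from a vertex to itself is the trivial path. Then the smap functor is well defined on the image of Φ: for any two paths p₁, p₂ : Quiver.Path u v with Φ p₁ = Φ p₂, one has Ψ p₁ = Ψ p₂. Consequently the assignment smap (Φ p) := Ψ p is a well-defined map from the image of Φ to the image of Ψ. -/

import Mathlib

/-!
Each extension `φ* e` reads and writes only the `e`-component of the global state. Along a simple
path these components are pairwise distinct, so threading a list element by element through the
whole of `Φ p` gives the same result as pushing the whole list through each `ψ* e` in turn: the
`e`-component is seen only by the `φ e` steps, in the same order either way. Thus
`Ψ p = stmap (Φ p)` for simple `p`, and in an acyclic quiver every path is simple.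
-/

noncomputable section

/-- The type of all arrows of a quiver. -/
abbrev QArr (V : Type) [Quiver.{0} V] : Type := Σ x : V, Σ y : V, x ⟶ y

section STC

variable {V : Type} [Quiver.{0} V] (obj : V → Type) (st : QArr V → Type)

/-- The global state: one state component per arrow. -/
abbrev GState : Type := ∀ e : QArr V, st e

open Classical in
/-- Update the `e`-component of the global state, leaving the others unchanged. -/
def updState (σ : GState st) (e : QArr V) (x : st e) : GState st :=
  fun e' => if h : e' = e then cast (congrArg st h).symm x else σ e'

variable (φ : ∀ e : QArr V, obj e.1 × st e → obj e.2.1 × st e)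

/-- The extension `φ* e` of the fundamental state thread `φ e` to the global state. -/
def phiExt (e : QArr V) : obj e.1 × GState st → obj e.2.1 × GState st :=
  fun z =>
    let r := φ e (z.1, z.2 e)
    (r.1, updState st z.2 e r.2)

/-- `Φ p` : composite of the extensions `φ*` along the arrows of the path `p`. -/
def Phi {u : V} : ∀ {v : V}, Quiver.Path u v → (obj u × GState st → obj v × GState st)
  | _, .nil => id
  | _, .cons p e => fun z => phiExt obj st φ ⟨_, _, e⟩ (Phi p z)

/-- `ψ e` (curried auxiliary version): the stateful list map of `φ e`. -/
def psiAux (e : QArr V) : List (obj e.1) → st e → List (obj e.2.1) × st e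
  | [], σ => ([], σ)
  | x :: xs, σ =>
    let r := φ e (x, σ)
    let r' := psiAux e xs r.2
    (r.1 :: r'.1, r'.2)

/-- `ψ e` : the stateful list map of the fundamental state thread `φ e`. -/
def psi (e : QArr V) : List (obj e.1) × st e → List (obj e.2.1) × st e :=
  fun z => psiAux obj st φ e z.1 z.2

/-- The extension `ψ* e` of `ψ e` to the global state. -/
def psiExt (e : QArr V) : List (obj e.1) × GState st → List (obj e.2.1) × GState st :=
  fun z =>
    let r := psi obj st φ e (z.1, z.2 e)
    (r.1, updState st z.2 e r.2)

/-- `Ψ p` : composite of the extensions `ψ*` along the arrows of the path `p`. -/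
def Psi {u : V} : ∀ {v : V}, Quiver.Path u v → (List (obj u) × GState st → List (obj v) × GState st)
  | _, .nil => id
  | _, .cons p e => fun z => psiExt obj st φ ⟨_, _, e⟩ (Psi p z)

/-- The list of arrows (as elements of `QArr V`) occurring in a path. -/
def pathArrows {u : V} : ∀ {v : V}, Quiver.Path u v → List (QArr V)
  | _, .nil => []
  | _, .cons p e => ⟨_, _, e⟩ :: pathArrows p

/-- A path is simple if its arrows are pairwise distinct as elements of `QArr V`. -/
def SimplePath {u v : V} (p : Quiver.Path u v) : Prop := (pathArrows p).Nodup

/-- The stateful list map of a function `F : α × S → β × S` (auxiliary curried form). -/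
def stmapAux {α β S : Type} (F : α × S → β × S) : List α → S → List β × S
  | [], σ => ([], σ)
  | x :: xs, σ =>
    let r := F (x, σ)
    let r' := stmapAux F xs r.2
    (r.1 :: r'.1, r'.2)

/-- The stateful list map of a function `F : α × S → β × S`. -/
def stmap {α β S : Type} (F : α × S → β × S) : List α × S → List β × S :=
  fun z => stmapAux F z.1 z.2

end STC

section Interchange

variable {V : Type} [Quiver.{0} V] {obj : V → Type} {st : QArr V → Type}
  {φ : ∀ e : QArr V, obj e.1 × st e → obj e.2.1 × st e}

theorem updState_eq_update [DecidableEq (QArr V)] (σ : GState st) (e : QArr V) (x : st e) :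
    updState st σ e x = Function.update σ e x := by
  funext e'
  by_cases h : e' = e
  · subst h; simp [updState]
  · simp [updState, h]

/-- `F` neither reads nor writes the `e`-component of the global state. -/
def IgnoresState (e : QArr V) {α β : Type} (F : α × GState st → β × GState st) : Prop :=
  ∀ x σ s, F (x, updState st σ e s) = ((F (x, σ)).1, updState st (F (x, σ)).2 e s)

theorem IgnoresState.snd_apply {e : QArr V} {α β : Type} {F : α × GState st → β × GState st}
    (hF : IgnoresState e F) (x : α) (σ : GState st) : (F (x, σ)).2 e = σ e := by
  classical
  have h := congrArg (fun r => r.2 e) (hF x σ (σ e))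
  simpa [updState_eq_update] using h

theorem ignoresState_id (e : QArr V) {α : Type} :
    IgnoresState e (id : α × GState st → α × GState st) :=
  fun _ _ _ => rfl

theorem IgnoresState.phiExt_comp {e e' : QArr V} (hne : e' ≠ e) {α : Type}
    {F : α × GState st → obj e'.1 × GState st} (hF : IgnoresState e F) :
    IgnoresState e (phiExt obj st φ e' ∘ F) := by
  classical
  intro x σ s
  simp only [Function.comp_apply, phiExt, hF x σ s]
  simp only [updState_eq_update, Function.update_of_ne hne, Function.update_comm hne.symm]

theorem ignoresState_Phi {e : QArr V} {u v : V} (p : Quiver.Path u v)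
    (he : e ∉ pathArrows p) : IgnoresState e (Phi obj st φ p) := by
  induction p with
  | nil => exact ignoresState_id e
  | cons p f ih =>
    simp only [pathArrows, List.mem_cons, not_or] at he
    exact (ih he.2).phiExt_comp (Ne.symm he.1)

theorem IgnoresState.stmap {e : QArr V} {α β : Type} {F : α × GState st → β × GState st}
    (hF : IgnoresState e F) : IgnoresState e (stmap F) := by
  intro l
  induction l with
  | nil => intro σ s; rfl
  | cons x xs ih =>
    intro σ s
    simp only [_root_.stmap, stmapAux] at ih ⊢
    rw [hF x σ s, ih]

theorem stmap_id {α S : Type} : stmap (id : α × S → α × S) = id := by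
  funext ⟨l, σ⟩
  induction l generalizing σ with
  | nil => rfl
  | cons x xs ih =>
    simp only [stmap, stmapAux, id] at ih ⊢
    rw [ih]

theorem stmap_phiExt_comp {e : QArr V} {α : Type} {F : α × GState st → obj e.1 × GState st}
    (hF : IgnoresState e F) :
    stmap (phiExt obj st φ e ∘ F) = psiExt obj st φ e ∘ stmap F := by
  classical
  funext ⟨l, σ⟩
  induction l generalizing σ with
  | nil => simp [stmap, stmapAux, psiExt, psi, psiAux, updState_eq_update]
  | cons x xs ih =>
    have hτ : (F (x, σ)).2 e = σ e := hF.snd_apply x σ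
    have hρ : (stmap F (xs, (F (x, σ)).2)).2 e = σ e := by rw [hF.stmap.snd_apply, hτ]
    have hstep := hF.stmap xs (F (x, σ)).2 (φ e ((F (x, σ)).1, σ e)).2
    simp only [stmap, Function.comp_apply] at ih hstep hρ ⊢
    simp only [stmapAux, Function.comp_apply, phiExt, hτ, ih, hstep]
    simp only [psiExt, psi, psiAux, hρ, updState_eq_update, Function.update_self,
      Function.update_idem]

theorem Psi_eq_stmap_Phi {u v : V} (p : Quiver.Path u v) (hp : SimplePath p) :
    Psi obj st φ p = stmap (Phi obj st φ p) := by
  induction p with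
  | nil => exact stmap_id.symm
  | cons p f ih =>
    obtain ⟨hf, hp⟩ : (⟨_, _, f⟩ : QArr V) ∉ pathArrows p ∧ SimplePath p :=
      List.nodup_cons.mp hp
    calc Psi obj st φ (p.cons f) = psiExt obj st φ ⟨_, _, f⟩ ∘ Psi obj st φ p := rfl
      _ = psiExt obj st φ ⟨_, _, f⟩ ∘ stmap (Phi obj st φ p) := by rw [ih hp]
      _ = stmap (phiExt obj st φ ⟨_, _, f⟩ ∘ Phi obj st φ p) :=
        (stmap_phiExt_comp (ignoresState_Phi p hf)).symm

end Interchange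

theorem nonempty_path_of_mem_pathArrows {V : Type} [Quiver.{0} V] {u w : V}
    (p : Quiver.Path u w) {e : QArr V} (he : e ∈ pathArrows p) :
    Nonempty (Quiver.Path e.2.1 w) := by
  induction p with
  | nil => simp [pathArrows] at he
  | cons p f ih =>
    rcases List.mem_cons.mp he with rfl | he
    · exact ⟨.nil⟩
    · obtain ⟨r⟩ := ih he
      exact ⟨r.cons f⟩

/-- A repeated arrow `f : x ⟶ y` closes the nontrivial cycle `f` followed by a path `y ⟶ x`. -/
theorem simplePath_of_acyclic {V : Type} [Quiver.{0} V]
    (hac : ∀ (v : V) (p : Quiver.Path v v), p = Quiver.Path.nil) {u v : V}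
    (p : Quiver.Path u v) : SimplePath p := by
  induction p with
  | nil => exact List.nodup_nil
  | cons p f ih =>
    refine List.nodup_cons.mpr ⟨fun hf => ?_, ih⟩
    obtain ⟨r⟩ := nonempty_path_of_mem_pathArrows p hf
    have hcycle := congrArg Quiver.Path.length (hac _ (f.toPath.comp r))
    simp at hcycle

/-- if the quiver is acyclic, `smap` is well defined on the image of `Φ`:
`Φ p₁ = Φ p₂` implies `Ψ p₁ = Ψ p₂`, so `smap (Φ p) := Ψ p` is a well-defined map
from the image of `Φ` to the image of `Ψ`. -/
theorem smap_well_defined_of_acyclic {V : Type} [Quiver.{0} V] (obj : V → Type)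
    (st : QArr V → Type)
    (φ : ∀ e : QArr V, obj e.1 × st e → obj e.2.1 × st e)
    (hac : ∀ (v : V) (p : Quiver.Path v v), p = Quiver.Path.nil) :
    ∀ (u v : V) (p₁ p₂ : Quiver.Path u v),
      Phi obj st φ p₁ = Phi obj st φ p₂ → Psi obj st φ p₁ = Psi obj st φ p₂ := by
  intro u v p₁ p₂ h
  rw [Psi_eq_stmap_Phi p₁ (simplePath_of_acyclic hac p₁),
    Psi_eq_stmap_Phi p₂ (simplePath_of_acyclic hac p₂), h]
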